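/- arXiv:2509.17722 — 2 statements merged into one kernel-verified Lean document; each statement's English description precedes it below -/
import Mathlib

section
/- In the DLIN-based TBE scheme of Kiltz over a cyclic group G of prime order p: for a key pair with secrets x1, x2, y1, y2 ∈ Zp* and public elements g1, g2, z, u1, u2 ∈ G satisfying g1^{x1} = g2^{x2} = z, u1 = g1^{y1}, u2 = g2^{y2}, and for any tag t ∈ Zp, message M ∈ G, encryption randomness r1, r2 ∈ Zp* producing C1 = g1^{r1}, C2 = g2^{r2}, D1 = z^{t·r1}·u1^{r1}, D2 = z^{t·r2}·u2^{r2}, K = z^{r1+r2}, E = M·K, and for any decryption randomness s1, s2 ∈ Zp*, the decryption key K' = (C1^{x1 + s1(t·x1 + y1)} · C2^{x2 + s2(t·x2 + y2)}) / (D1^{s1} · D2^{s2}) equals K, and hence E·K'^{-1} = M. -/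
private lemma dlin_aux {G : Type*} [CommGroup G] (g : G) (x y t r s : ℤ) :
    (g ^ r) ^ (x + s * (t * x + y)) / ((g ^ x) ^ (t * r) * (g ^ y) ^ r) ^ s = g ^ (x * r) := by
  simp only [← zpow_mul, ← zpow_add, ← zpow_sub, div_eq_iff_eq_mul]
  congr 1
  ring

/-- Perfect decryption correctness of Kiltz's DLIN-based TBE: for all key material,
tags, messages and encryption/decryption randomness, the randomized decryption key
`K'` equals the honest key `K`, hence `E · K'⁻¹ = M`. -/
theorem dlin_tbe_correctness {G : Type*} [CommGroup G]
    (g1 g2 z u1 u2 M C1 C2 D1 D2 K E : G) (x1 x2 y1 y2 t r1 r2 s1 s2 : ℤ)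
    (hz1 : g1 ^ x1 = z) (hz2 : g2 ^ x2 = z)
    (hu1 : u1 = g1 ^ y1) (hu2 : u2 = g2 ^ y2)
    (hC1 : C1 = g1 ^ r1) (hC2 : C2 = g2 ^ r2)
    (hD1 : D1 = z ^ (t * r1) * u1 ^ r1) (hD2 : D2 = z ^ (t * r2) * u2 ^ r2)
    (hK : K = z ^ (r1 + r2)) (hE : E = M * K) :
    (C1 ^ (x1 + s1 * (t * x1 + y1)) * C2 ^ (x2 + s2 * (t * x2 + y2))) /
        (D1 ^ s1 * D2 ^ s2) = K ∧
    E * ((C1 ^ (x1 + s1 * (t * x1 + y1)) * C2 ^ (x2 + s2 * (t * x2 + y2))) /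
        (D1 ^ s1 * D2 ^ s2))⁻¹ = M := by
  have key : (C1 ^ (x1 + s1 * (t * x1 + y1)) * C2 ^ (x2 + s2 * (t * x2 + y2))) /
      (D1 ^ s1 * D2 ^ s2) = K := by
    rw [hC1, hC2, hD1, hD2, hu1, hu2, ← hz1, hK, ← hz1]
    have hz : g2 ^ x2 = g1 ^ x1 := hz2.trans hz1.symm
    rw [mul_div_mul_comm, dlin_aux]
    conv_lhs => rw [show (g1:G) ^ x1 = g2 ^ x2 from hz.symm]
    rw [dlin_aux, zpow_mul, zpow_mul, hz, ← zpow_mul, ← zpow_mul, ← zpow_add]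
    rw [← zpow_mul]; congr 1; ring
  refine ⟨key, ?_⟩
  rw [key, hE]
  group
end

section
/- Equality-test correctness for different plaintexts of PKEET_Ours: if TBE' has perfect decryption correctness, then for any two distinct plaintexts pt^(0) ≠ pt^(1), the Test algorithm on honestly generated ciphertexts and trapdoors outputs 1 if and only if H(pt^(0)) = H(pt^(1)); hence the probability (over the random choice of H from the hash family H and the randomness of all algorithms) that Test outputs 1 is at most the probability of a hash collision between pt^(0) and pt^(1). -/
open MeasureTheory

/-- Equality-test correctness of PKEET_Ours for different plaintexts: for honestly
generated ciphertexts of distinct plaintexts, the Test algorithm outputs 1 iff the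
hash values collide, hence the probability that Test outputs 1 is at most the
probability of a hash collision between `pt0` and `pt1`. -/
theorem pkeet_test_different_plaintexts {Ω EK' DK' Tag Pt Hsh Ct' R' : Type*}
    [MeasurableSpace Ω] (μ : Measure Ω) [IsProbabilityMeasure μ]
    (Enc' : EK' → Tag → Hsh → R' → Ct') (Dec' : DK' → Tag → Ct' → Hsh)
    (Valid' : EK' → DK' → Prop)
    (hCorrect : ∀ ek dk, Valid' ek dk → ∀ tag m r, Dec' dk tag (Enc' ek tag m r) = m)
    (pt0 pt1 : Pt) (hne : pt0 ≠ pt1)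
    (H : Ω → Pt → Hsh) (ek0 ek1 : Ω → EK') (dk0 dk1 : Ω → DK')
    (hv0 : ∀ ω, Valid' (ek0 ω) (dk0 ω)) (hv1 : ∀ ω, Valid' (ek1 ω) (dk1 ω))
    (vk0 vk1 : Ω → Tag) (r0 r1 : Ω → R') (ct0 ct1 : Ω → Ct')
    (hct0 : ∀ ω, ct0 ω = Enc' (ek0 ω) (vk0 ω) (H ω pt0) (r0 ω))
    (hct1 : ∀ ω, ct1 ω = Enc' (ek1 ω) (vk1 ω) (H ω pt1) (r1 ω)) :
    (∀ ω, Dec' (dk0 ω) (vk0 ω) (ct0 ω) = Dec' (dk1 ω) (vk1 ω) (ct1 ω) ↔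
        H ω pt0 = H ω pt1) ∧
    μ {ω | Dec' (dk0 ω) (vk0 ω) (ct0 ω) = Dec' (dk1 ω) (vk1 ω) (ct1 ω)} ≤
      μ {ω | H ω pt0 = H ω pt1} := by
  have key : ∀ ω, Dec' (dk0 ω) (vk0 ω) (ct0 ω) = Dec' (dk1 ω) (vk1 ω) (ct1 ω) ↔
      H ω pt0 = H ω pt1 := by
    intro ω
    rw [hct0, hct1, hCorrect _ _ (hv0 ω), hCorrect _ _ (hv1 ω)]
  refine ⟨key, measure_mono ?_⟩
  intro ω hω
  exact (key ω).mp hω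
end
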